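/- arXiv:1611.06277 — 2 statements merged into one kernel-verified Lean document; each statement's English description precedes it below -/
import Mathlib

section
/- For the linear system, the function F(x,t) = [A¹²; A²²] e^{tA²²} x̃ solves the orthogonal dynamics equation ∂F/∂t = QLF with initial condition F(x,0) = QLx = Ã x, where L is the Liouville operator of the linear system and Q = I − P with P the truncation projector. -/
/-!
For fixed `t`, `F(·, t)` is the linear map `Φₜ y = [A¹²; A²²] e^{tA²²} ỹ`, so its Liouville
derivative is `LF(x, t) = Φₜ (A x)` and `QLF(x, t) = Φₜ (A (x − Px))`. Since `x − Px = (0, x̃)`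
and `Φₜ` only reads the lower block, this is `[A¹²; A²²] e^{tA²²} A²² x̃ = ∂F/∂t`.
-/

open NormedSpace Matrix

theorem hasDerivAt_mulVec_exp_smul_mulVec {ι κ : Type*} [Fintype ι] [Fintype κ] [DecidableEq κ]
    (N : Matrix ι κ ℝ) (M : Matrix κ κ ℝ) (v : κ → ℝ) (t : ℝ) :
    HasDerivAt (fun s : ℝ => N *ᵥ (exp (s • M) *ᵥ v)) (N *ᵥ (exp (t • M) *ᵥ (M *ᵥ v))) t := by
  let _ := Matrix.linftyOpNormedRing (n := κ) (α := ℝ)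
  let _ := Matrix.linftyOpNormedAlgebra (n := κ) (R := ℝ) (α := ℝ)
  let Φ : Matrix κ κ ℝ →L[ℝ] (ι → ℝ) :=
    (mulVecLin N ∘ₗ LinearMap.applyₗ v ∘ₗ (toLin' : Matrix κ κ ℝ ≃ₗ[ℝ] _).toLinearMap)
      |>.toContinuousLinearMap
  rw [mulVec_mulVec _ _ M]
  exact Φ.hasFDerivAt.comp_hasDerivAt t (hasDerivAt_exp_smul_const M t)

theorem fderiv_linearMap_apply {E F : Type*} [NormedAddCommGroup E] [NormedSpace ℝ E]
    [FiniteDimensional ℝ E] [NormedAddCommGroup F] [NormedSpace ℝ F]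
    (f : E →ₗ[ℝ] F) (x v : E) : fderiv ℝ f x v = f v := by
  rw [← f.coe_toContinuousLinearMap', ContinuousLinearMap.fderiv]

theorem fromBlocks_mulVec_sumElim_zero {R l m n o : Type*} [Semiring R] [Fintype m] [Fintype n]
    (A : Matrix l m R) (B : Matrix l n R) (C : Matrix o m R) (D : Matrix o n R) (v : n → R) :
    fromBlocks A B C D *ᵥ Sum.elim 0 v = fromRows B D *ᵥ v := by
  rw [fromRows_mulVec]
  simp [fromBlocks_mulVec]

theorem fromBlocks_zero_zero_mulVec {R l m n o : Type*} [Semiring R] [Fintype m] [Fintype n]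
    (B : Matrix l n R) (D : Matrix o n R) (x : m ⊕ n → R) :
    fromBlocks 0 B 0 D *ᵥ x = fromRows B D *ᵥ (x ∘ Sum.inr) := by
  rw [fromRows_mulVec, ← Sum.elim_comp_inl_inr x, fromBlocks_mulVec]
  simp

/-- For the linear system dφ/dt = Ax, the function
F(x,t) = [A¹²; A²²] e^{tA²²} x̃ solves the orthogonal dynamics equation
∂F/∂t = QLF with F(x,0) = QLx = Ãx, where L is the Liouville operator of the
linear system (LF(x,t) being the derivative of F(·,t) at x in direction Ax)
and Q = I − P with P the truncation projector. -/
theorem stmt9 {m n : ℕ}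
    (A11 : Matrix (Fin m) (Fin m) ℝ) (A12 : Matrix (Fin m) (Fin n) ℝ)
    (A21 : Matrix (Fin n) (Fin m) ℝ) (A22 : Matrix (Fin n) (Fin n) ℝ) :
    let A := Matrix.fromBlocks A11 A12 A21 A22
    let F : ((Fin m ⊕ Fin n) → ℝ) → ℝ → ((Fin m ⊕ Fin n) → ℝ) := fun x t =>
      Sum.elim
        (A12.mulVec ((NormedSpace.exp (t • A22)).mulVec fun i => x (Sum.inr i)))
        (A22.mulVec ((NormedSpace.exp (t • A22)).mulVec fun i => x (Sum.inr i)))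
    let LF : ((Fin m ⊕ Fin n) → ℝ) → ℝ → ((Fin m ⊕ Fin n) → ℝ) := fun x t =>
      fderiv ℝ (fun y => F y t) x (A.mulVec x)
    let trunc : ((Fin m ⊕ Fin n) → ℝ) → ((Fin m ⊕ Fin n) → ℝ) := fun x =>
      Sum.elim (fun i => x (Sum.inl i)) 0
    (∀ (x : (Fin m ⊕ Fin n) → ℝ) (t : ℝ),
        HasDerivAt (F x) (LF x t - LF (trunc x) t) t)
    ∧ (∀ x : (Fin m ⊕ Fin n) → ℝ,
        F x 0 = (Matrix.fromBlocks (0 : Matrix (Fin m) (Fin m) ℝ) A12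
          (0 : Matrix (Fin n) (Fin m) ℝ) A22).mulVec x) := by
  intro A F LF trunc
  let Φ (t : ℝ) : ((Fin m ⊕ Fin n) → ℝ) →ₗ[ℝ] ((Fin m ⊕ Fin n) → ℝ) :=
    mulVecLin (fromRows A12 A22) ∘ₗ mulVecLin (exp (t • A22)) ∘ₗ LinearMap.funLeft ℝ ℝ Sum.inr
  have hF (x : (Fin m ⊕ Fin n) → ℝ) (t : ℝ) : F x t = Φ t x := (fromRows_mulVec ..).symm
  have hx (x : (Fin m ⊕ Fin n) → ℝ) : x - trunc x = Sum.elim (0 : Fin m → ℝ) (x ∘ Sum.inr) := by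
    ext (i | i) <;> simp [trunc]
  refine ⟨fun x t => ?_, fun x => ?_⟩
  · have hLF : LF x t - LF (trunc x) t = Φ t (A *ᵥ (x - trunc x)) := by
      simp only [LF, funext (hF · t), fderiv_linearMap_apply, mulVec_sub, map_sub]
    have hinr : (fromRows A12 A22 *ᵥ (x ∘ Sum.inr)) ∘ Sum.inr = A22 *ᵥ (x ∘ Sum.inr) := by
      rw [fromRows_mulVec, Sum.elim_comp_inr]
    have h := hasDerivAt_mulVec_exp_smul_mulVec (fromRows A12 A22) A22 (x ∘ Sum.inr) t
    rw [← hinr] at h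
    rw [hLF, hx, fromBlocks_mulVec_sumElim_zero, show F x = (Φ · x) from funext (hF x)]
    exact h
  · rw [hF, fromBlocks_zero_zero_mulVec]
    simp [Φ, LinearMap.funLeft]
end

section
/- The Dyson formula holds for bounded operators: if L and QL are bounded linear operators on a Banach space with Q = I − P, then e^{tL} = e^{tQL} + ∫₀ᵗ e^{(t−s)L} PL e^{sQL} ds. -/
/-! Since `L - QL = PL`, this is Duhamel's formula for the perturbation of `QL` by `PL`:
the derivative of `s ↦ e^{(t-s)L} e^{sQL}` is `-e^{(t-s)L} (L - QL) e^{sQL}`, and integrating it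
over `[0, t]` gives `e^{tQL} - e^{tL}`. -/

/-- The operator exponential e^{tM} as a power series. -/
noncomputable def opExp {X : Type*} [NormedAddCommGroup X] [NormedSpace ℝ X]
    [CompleteSpace X] (t : ℝ) (M : X →L[ℝ] X) : X →L[ℝ] X :=
  ∑' n : ℕ, (t ^ n / n.factorial : ℝ) • M ^ n

open NormedSpace

lemma opExp_eq_exp {X : Type*} [NormedAddCommGroup X] [NormedSpace ℝ X]
    [CompleteSpace X] (t : ℝ) (M : X →L[ℝ] X) : opExp t M = exp (t • M) := by
  rw [opExp, exp_eq_tsum ℝ]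
  congr 1
  ext n
  rw [smul_pow, smul_smul, div_eq_inv_mul]

section Duhamel

variable {𝔸 : Type*} [NormedRing 𝔸] [NormedAlgebra ℝ 𝔸] [CompleteSpace 𝔸]

lemma hasDerivAt_exp_smul_sub_mul_exp_smul (A B : 𝔸) (t s : ℝ) :
    HasDerivAt (fun u : ℝ => exp ((t - u) • A) * exp (u • B))
      (-(exp ((t - s) • A) * (A - B) * exp (s • B))) s := by
  have hA : HasDerivAt (fun u : ℝ => exp ((t - u) • A)) (-(exp ((t - s) • A) * A)) s := by
    simpa [Function.comp_def] using
      (hasDerivAt_exp_smul_const A (t - s)).scomp s ((hasDerivAt_id s).const_sub t)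
  refine (hA.mul (hasDerivAt_exp_smul_const' B s)).congr_deriv ?_
  simp only [mul_sub, sub_mul, neg_mul, mul_assoc]
  abel

lemma continuous_exp_smul_sub_mul_mul_exp_smul (A C B : 𝔸) (t : ℝ) :
    Continuous fun s : ℝ => exp ((t - s) • A) * C * exp (s • B) := by
  have hA : Continuous fun s : ℝ => exp ((t - s) • A) :=
    (differentiable_exp_smul_const ℝ A).continuous.comp (continuous_sub_left t)
  exact (hA.mul continuous_const).mul (differentiable_exp_smul_const ℝ B).continuous

theorem exp_smul_eq_exp_smul_add_integral (A B : 𝔸) (t : ℝ) :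
    exp (t • A) = exp (t • B) + ∫ s in (0 : ℝ)..t, exp ((t - s) • A) * (A - B) * exp (s • B) := by
  have hFTC := intervalIntegral.integral_eq_sub_of_hasDerivAt
    (fun s _ => hasDerivAt_exp_smul_sub_mul_exp_smul A B t s)
    ((continuous_exp_smul_sub_mul_mul_exp_smul A (A - B) B t).neg.intervalIntegrable 0 t)
  simp only [intervalIntegral.integral_neg, sub_self, sub_zero, zero_smul, exp_zero, one_mul,
    mul_one] at hFTC
  rw [neg_eq_iff_eq_neg] at hFTC
  rw [hFTC]
  abel

end Duhamel

theorem stmt13_general {X : Type*} [NormedAddCommGroup X] [NormedSpace ℝ X] [CompleteSpace X]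
    (L P : X →L[ℝ] X) (Q : X →L[ℝ] X) (hQ : Q = 1 - P) :
    ∀ t : ℝ,
      opExp t L
        = opExp t (Q * L)
          + ∫ s in (0:ℝ)..t, opExp (t - s) L * (P * L) * opExp s (Q * L) := by
  intro t
  have hPL : P * L = L - Q * L := by rw [hQ]; noncomm_ring
  simp only [opExp_eq_exp, hPL]
  exact exp_smul_eq_exp_smul_add_integral L (Q * L) t

/-- Dyson formula for bounded operators: with Q = I − P,
e^{tL} = e^{tQL} + ∫₀ᵗ e^{(t−s)L} PL e^{sQL} ds. -/
theorem stmt13 {X : Type*} [NormedAddCommGroup X] [NormedSpace ℝ X] [CompleteSpace X]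
    (L P : X →L[ℝ] X) (hP : P * P = P) (Q : X →L[ℝ] X) (hQ : Q = 1 - P) :
    ∀ t : ℝ,
      opExp t L
        = opExp t (Q * L)
          + ∫ s in (0:ℝ)..t, opExp (t - s) L * (P * L) * opExp s (Q * L) :=
  stmt13_general L P Q hQ
end
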